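/- The dual of the cyclic group J_A generated by the exponential grading element is the special linear subgroup of the transposed matrix: (J_A)^T = SL_{Aᵀ}. -/

import Mathlib

open scoped BigOperators
open Matrix

noncomputable section

abbrev QZ : Type := AddCircle (1 : ℚ)

def qz : ℚ →+ QZ := QuotientAddGroup.mk' _

def GA {n : ℕ} (A : Matrix (Fin n) (Fin n) ℤ) : AddSubgroup (Fin n → QZ) where
  carrier := {g | ∀ i, ∑ j, A i j • g j = 0}
  zero_mem' := by intro i; simp
  add_mem' := by
    intro a b ha hb i
    simp only [Pi.add_apply, smul_add, Finset.sum_add_distrib, ha i, hb i, add_zero]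
  neg_mem' := by
    intro a ha i
    simp only [Pi.neg_apply, smul_neg, Finset.sum_neg_distrib, ha i, neg_zero]

def SLA {n : ℕ} (A : Matrix (Fin n) (Fin n) ℤ) : AddSubgroup (Fin n → QZ) where
  carrier := {g | g ∈ GA A ∧ ∑ i, g i = 0}
  zero_mem' := ⟨(GA A).zero_mem, by simp⟩
  add_mem' := by
    intro a b ha hb
    exact ⟨(GA A).add_mem ha.1 hb.1, by simp [Pi.add_apply, Finset.sum_add_distrib, ha.2, hb.2]⟩
  neg_mem' := by
    intro a ha
    exact ⟨(GA A).neg_mem ha.1, by simp [Pi.neg_apply, Finset.sum_neg_distrib, ha.2]⟩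

def jA {n : ℕ} (A : Matrix (Fin n) (Fin n) ℤ) : Fin n → QZ :=
  fun i => qz (((A.map (Int.cast : ℤ → ℚ))⁻¹).mulVec 1 i)

/-- `v : ℚ^n` is a lift of `g : (ℚ/ℤ)^n`. -/
def IsLift {n : ℕ} (v : Fin n → ℚ) (g : Fin n → QZ) : Prop := ∀ i, qz (v i) = g i

lemma qz_eq_zero_iff (q : ℚ) : qz q = 0 ↔ ∃ m : ℤ, (m : ℚ) = q := by
  constructor
  · intro h
    have : q ∈ AddSubgroup.zmultiples (1 : ℚ) := by
      rwa [qz, QuotientAddGroup.mk'_apply, QuotientAddGroup.eq_zero_iff] at h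
    obtain ⟨k, hk⟩ := this
    exact ⟨k, by simpa using hk⟩
  · rintro ⟨m, rfl⟩
    rw [qz, QuotientAddGroup.mk'_apply, QuotientAddGroup.eq_zero_iff]
    exact ⟨m, by simp⟩

lemma exists_lift {n : ℕ} (g : Fin n → QZ) : ∃ v : Fin n → ℚ, IsLift v g := by
  choose v hv using fun i => QuotientAddGroup.mk'_surjective _ (g i)
  exact ⟨v, hv⟩

lemma row_int {n : ℕ} {A : Matrix (Fin n) (Fin n) ℤ} {h : Fin n → QZ} (hh : h ∈ GA A)
    {vh : Fin n → ℚ} (hl : IsLift vh h) (i : Fin n) :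
    ∃ m : ℤ, (m : ℚ) = ∑ j, (A i j : ℚ) * vh j := by
  have h0 : qz (∑ j, (A i j : ℚ) * vh j) = 0 := by
    have := hh i
    calc qz (∑ j, (A i j : ℚ) * vh j) = ∑ j, A i j • qz (vh j) := by
          rw [map_sum]
          refine Finset.sum_congr rfl fun j _ => ?_
          rw [← map_zsmul qz, zsmul_eq_mul]
      _ = ∑ j, A i j • h j := by
          refine Finset.sum_congr rfl fun j _ => by rw [hl j]
      _ = 0 := hh i
  exact (qz_eq_zero_iff _).1 h0

/-- The Berglund–Hübsch dual `H^T` of a subgroup `H ≤ G_A`: all `g ∈ G_{Aᵀ}` such that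
for every `h ∈ H` and all lifts `ĝ, ĥ ∈ ℚ^n` of `g, h`, the number `∑ᵢⱼ ĝᵢ Aᵢⱼ ĥⱼ` is an
integer. -/
def dual {n : ℕ} (A : Matrix (Fin n) (Fin n) ℤ) (H : AddSubgroup (Fin n → QZ))
    (hH : H ≤ GA A) : AddSubgroup (Fin n → QZ) where
  carrier := {g | g ∈ GA Aᵀ ∧ ∀ h ∈ H, ∀ vg vh : Fin n → ℚ, IsLift vg g → IsLift vh h →
    ∃ m : ℤ, (m : ℚ) = ∑ i, ∑ j, vg i * (A i j : ℚ) * vh j}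
  zero_mem' := by
    refine ⟨(GA Aᵀ).zero_mem, ?_⟩
    intro h hh vg vh lg lh
    have hg : ∀ i, ∃ m : ℤ, (m : ℚ) = vg i := by
      intro i
      exact (qz_eq_zero_iff _).1 ((lg i).trans rfl)
    choose mg hmg using hg
    choose c hc using fun i => row_int (hH hh) lh i
    refine ⟨∑ i, mg i * c i, ?_⟩
    push_cast
    calc (∑ i, (mg i : ℚ) * (c i : ℚ))
        = ∑ i, vg i * ∑ j, (A i j : ℚ) * vh j := by
          refine Finset.sum_congr rfl fun i _ => by rw [hmg i, hc i]
      _ = ∑ i, ∑ j, vg i * (A i j : ℚ) * vh j := by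
          refine Finset.sum_congr rfl fun i _ => ?_
          rw [Finset.mul_sum]
          exact Finset.sum_congr rfl fun j _ => (mul_assoc _ _ _).symm
  add_mem' := by
    intro a b ha hb
    refine ⟨(GA Aᵀ).add_mem ha.1 hb.1, ?_⟩
    intro h hh vg vh lg lh
    obtain ⟨va, hva⟩ := exists_lift a
    have hvb : IsLift (vg - va) b := by
      intro i
      have : qz (vg i - va i) = qz (vg i) - qz (va i) := map_sub qz _ _
      rw [Pi.sub_apply, this, lg i, hva i, Pi.add_apply, add_sub_cancel_left]
    obtain ⟨m₁, e₁⟩ := ha.2 h hh va vh hva lh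
    obtain ⟨m₂, e₂⟩ := hb.2 h hh (vg - va) vh hvb lh
    refine ⟨m₁ + m₂, ?_⟩
    push_cast
    rw [e₁, e₂, ← Finset.sum_add_distrib]
    refine Finset.sum_congr rfl fun i _ => ?_
    rw [← Finset.sum_add_distrib]
    refine Finset.sum_congr rfl fun j _ => ?_
    simp only [Pi.sub_apply]
    ring
  neg_mem' := by
    intro a ha
    refine ⟨(GA Aᵀ).neg_mem ha.1, ?_⟩
    intro h hh vg vh lg lh
    have hvg : IsLift (-vg) a := by
      intro i
      have : qz (-(vg i)) = - qz (vg i) := map_neg qz _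
      rw [Pi.neg_apply, this, lg i, Pi.neg_apply, neg_neg]
    obtain ⟨m, e⟩ := ha.2 h hh (-vg) vh hvg lh
    refine ⟨-m, ?_⟩
    push_cast
    rw [e, ← Finset.sum_neg_distrib]
    refine Finset.sum_congr rfl fun i _ => ?_
    rw [← Finset.sum_neg_distrib]
    refine Finset.sum_congr rfl fun j _ => ?_
    simp only [Pi.neg_apply]
    ring

lemma dual_le {n : ℕ} (A : Matrix (Fin n) (Fin n) ℤ) (H : AddSubgroup (Fin n → QZ))
    (hH : H ≤ GA A) : dual A H hH ≤ GA Aᵀ := fun _ hg => hg.1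

lemma SLA_le {n : ℕ} (A : Matrix (Fin n) (Fin n) ℤ) : SLA A ≤ GA A := fun _ hg => hg.1


lemma qz_intCast (m : ℤ) : qz (m : ℚ) = 0 := by
  rw [qz, QuotientAddGroup.mk'_apply, QuotientAddGroup.eq_zero_iff]
  exact ⟨m, by simp⟩

lemma jA_mem {n : ℕ} (A : Matrix (Fin n) (Fin n) ℤ) (hA : A.det ≠ 0) : jA A ∈ GA A := by
  have hdet : (A.map (Int.cast : ℤ → ℚ)).det ≠ 0 := by
    have h1 : (A.map (Int.cast : ℤ → ℚ)).det = (A.det : ℚ) := by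
      rw [show (Int.cast : ℤ → ℚ) = ⇑(Int.castRingHom ℚ) from rfl,
        ← RingHom.mapMatrix_apply, ← RingHom.map_det]
    rw [h1]
    exact_mod_cast hA
  have hBinv : (A.map (Int.cast : ℤ → ℚ)) * (A.map (Int.cast : ℤ → ℚ))⁻¹ = 1 :=
    Matrix.mul_nonsing_inv _ (isUnit_iff_ne_zero.mpr hdet)
  show ∀ i, ∑ j, A i j • jA A j = 0
  intro i
  have key : ∑ j, A i j • jA A j
      = qz (∑ j, (A.map (Int.cast : ℤ → ℚ)) i j *
          ((A.map (Int.cast : ℤ → ℚ))⁻¹).mulVec 1 j) := by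
    rw [map_sum]
    refine Finset.sum_congr rfl fun j _ => ?_
    rw [jA, ← map_zsmul qz, zsmul_eq_mul]
    rfl
  rw [key]
  have h2 : ∑ j, (A.map (Int.cast : ℤ → ℚ)) i j *
        ((A.map (Int.cast : ℤ → ℚ))⁻¹).mulVec 1 j
      = ((A.map (Int.cast : ℤ → ℚ)) * (A.map (Int.cast : ℤ → ℚ))⁻¹).mulVec 1 i := by
    rw [← Matrix.mulVec_mulVec]
    simp [Matrix.mulVec, dotProduct]
  rw [h2, hBinv, Matrix.one_mulVec]
  simpa using qz_intCast 1

lemma JA_le {n : ℕ} (A : Matrix (Fin n) (Fin n) ℤ) (hA : A.det ≠ 0) :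
    AddSubgroup.zmultiples (jA A) ≤ GA A := by
  intro x hx
  rw [AddSubgroup.mem_zmultiples_iff] at hx
  obtain ⟨k, rfl⟩ := hx
  exact AddSubgroup.zsmul_mem _ (jA_mem A hA) k

/-
The lift `w = A⁻¹·𝟙` of `j_A` satisfies `A w = 𝟙`, so pairing any `ĝ` with `w` gives `∑ᵢ ĝᵢ`:
an element of `G_{Aᵀ}` pairs integrally with `j_A` exactly when it lies in `SL_{Aᵀ}`. Any other
lift of a multiple `k • j_A` is `k w + z` with `z` integral, and `ĝᵀ A z` is integral because the
entries of `ĝᵀ A` are integers for `g ∈ G_{Aᵀ}`.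
-/

theorem Matrix.sum_sum_mul_mul_eq_dotProduct_mulVec {R ι κ : Type*} [CommSemiring R]
    [Fintype ι] [Fintype κ] (B : Matrix ι κ R) (u : ι → R) (v : κ → R) :
    ∑ i, ∑ j, u i * B i j * v j = u ⬝ᵥ (B *ᵥ v) := by
  simp only [dotProduct, mulVec, Finset.mul_sum, mul_assoc]

section

variable {n : ℕ}

lemma qz_sum_of_isLift {v : Fin n → ℚ} {g : Fin n → QZ} (hv : IsLift v g) :
    qz (∑ i, v i) = ∑ i, g i := by
  rw [map_sum]
  exact Finset.sum_congr rfl fun i _ => hv i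

lemma IsLift.zsmul {v : Fin n → ℚ} {g : Fin n → QZ} (hv : IsLift v g) (k : ℤ) :
    IsLift (k • v) (k • g) := fun i => by
  simp only [Pi.smul_apply, map_zsmul, hv i]

lemma exists_eq_add_intCast_of_isLift {v v' : Fin n → ℚ} {g : Fin n → QZ} (hv : IsLift v g)
    (hv' : IsLift v' g) : ∃ z : Fin n → ℤ, v' = v + (Int.cast ∘ z) := by
  choose z hz using fun i => (qz_eq_zero_iff (v' i - v i)).1 (by rw [map_sub, hv, hv', sub_self])
  exact ⟨z, funext fun i => by simp [hz]⟩

lemma exists_vecMul_eq_intCast {A : Matrix (Fin n) (Fin n) ℤ} {g : Fin n → QZ}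
    (hg : g ∈ GA Aᵀ) {v : Fin n → ℚ} (hv : IsLift v g) :
    ∃ c : Fin n → ℤ, v ᵥ* A.map (Int.cast : ℤ → ℚ) = Int.cast ∘ c := by
  choose c hc using row_int hg hv
  exact ⟨c, funext fun j => by simp [hc, vecMul, dotProduct, mul_comm]⟩

def jALift (A : Matrix (Fin n) (Fin n) ℤ) : Fin n → ℚ := (A.map (Int.cast : ℤ → ℚ))⁻¹ *ᵥ 1

lemma isLift_jALift (A : Matrix (Fin n) (Fin n) ℤ) : IsLift (jALift A) (jA A) := fun _ => rfl

lemma mulVec_jALift {A : Matrix (Fin n) (Fin n) ℤ} (hA : A.det ≠ 0) :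
    A.map (Int.cast : ℤ → ℚ) *ᵥ jALift A = 1 := by
  have hdet : IsUnit (A.map (Int.cast : ℤ → ℚ)).det := by
    rw [← Int.cast_det, isUnit_iff_ne_zero]
    exact_mod_cast hA
  rw [jALift, mulVec_mulVec, mul_nonsing_inv _ hdet, one_mulVec]

lemma sum_sum_mul_mul_jALift {A : Matrix (Fin n) (Fin n) ℤ} (hA : A.det ≠ 0) (u : Fin n → ℚ) :
    ∑ i, ∑ j, u i * (A i j : ℚ) * jALift A j = ∑ i, u i :=
  (sum_sum_mul_mul_eq_dotProduct_mulVec (A.map Int.cast) u _).trans <| by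
    rw [mulVec_jALift hA, dotProduct_one]

lemma exists_intCast_eq_pairing_zsmul_jA {A : Matrix (Fin n) (Fin n) ℤ} (hA : A.det ≠ 0)
    {g : Fin n → QZ} (hg : g ∈ SLA Aᵀ) (k : ℤ) {vg vh : Fin n → ℚ} (hvg : IsLift vg g)
    (hvh : IsLift vh (k • jA A)) : ∃ m : ℤ, (m : ℚ) = ∑ i, ∑ j, vg i * (A i j : ℚ) * vh j := by
  obtain ⟨z, rfl⟩ := exists_eq_add_intCast_of_isLift ((isLift_jALift A).zsmul k) hvh
  obtain ⟨c, hc⟩ := exists_vecMul_eq_intCast hg.1 hvg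
  obtain ⟨s, hs⟩ := (qz_eq_zero_iff _).1 ((qz_sum_of_isLift hvg).trans hg.2)
  refine ⟨k * s + c ⬝ᵥ z,
    Eq.trans ?_ (sum_sum_mul_mul_eq_dotProduct_mulVec (A.map Int.cast) vg _).symm⟩
  rw [mulVec_add, dotProduct_add, mulVec_smul, mulVec_jALift hA, dotProduct_mulVec, hc,
    dotProduct_smul, dotProduct_one, ← hs, zsmul_eq_mul, Int.cast_add, Int.cast_mul,
    ← eq_intCast (Int.castRingHom ℚ) (c ⬝ᵥ z), RingHom.map_dotProduct]
  rfl

end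

theorem dual_JA_eq_SLA_transpose_general {n : ℕ} (A : Matrix (Fin n) (Fin n) ℤ)
    (hA : A.det ≠ 0) :
    dual A (AddSubgroup.zmultiples (jA A)) (JA_le A hA) = SLA Aᵀ := by
  ext g
  refine ⟨fun ⟨hgA, hgJ⟩ => ⟨hgA, ?_⟩, fun hg => ⟨hg.1, ?_⟩⟩
  · obtain ⟨v, hv⟩ := exists_lift g
    obtain ⟨m, hm⟩ := hgJ _ (AddSubgroup.mem_zmultiples _) v _ hv (isLift_jALift A)
    rw [← qz_sum_of_isLift hv, ← sum_sum_mul_mul_jALift hA, ← hm]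
    exact qz_intCast m
  · rintro _ ⟨k, rfl⟩ vg vh hvg hvh
    exact exists_intCast_eq_pairing_zsmul_jA hA hg k hvg hvh

/-- `(J_A)^T = SL_{Aᵀ}`, where `J_A` is the cyclic subgroup generated by the
exponential grading element `j_A`. -/
theorem dual_JA_eq_SLA_transpose {n : ℕ} (hn : 1 ≤ n) (A : Matrix (Fin n) (Fin n) ℤ)
    (hA : A.det ≠ 0) :
    dual A (AddSubgroup.zmultiples (jA A)) (JA_le A hA) = SLA Aᵀ :=
  dual_JA_eq_SLA_transpose_general A hA

end
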